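/- Let r ≥ 1 be an integer, g ≥ 2 an integer and T ≥ 0 a real number. Then the series Σ_{λ ∈ Λ_r^B} exp(−(T/2) c_λ^B) (d_λ^B)^{2−2g} and Σ_{λ ∈ Λ_r^B} (d_λ^B)^{−2} converge, and 1 ≤ Σ_{λ ∈ Λ_r^B} exp(−(T/2) c_λ^B) (d_λ^B)^{2−2g} ≤ Σ_{λ ∈ Λ_r^B} (d_λ^B)^{−2}. -/
import Mathlib


/-- The Casimir eigenvalue `c_λ^B = (1/(2r+1)) Σ_{i=1}^r λ_i (λ_i + 2r + 1 - 2i)`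
for a dominant weight `λ` of type `B_r` (indices here are 0-based). -/
noncomputable def casimirB (r : ℕ) (lam : Fin r → ℕ) : ℝ :=
  (1 / (2 * (r : ℝ) + 1)) *
    ∑ i : Fin r, (lam i : ℝ) * ((lam i : ℝ) + 2 * (r : ℝ) + 1 - 2 * (((i : ℕ) : ℝ) + 1))

/-- The dimension `d_λ^B = ∏_{1≤i<j≤r} (λ_i - λ_j + j - i)/(j - i) ·
∏_{1≤i≤j≤r} (λ_i + λ_j + 2r + 1 - i - j)/(2r + 1 - i - j)` of the irreducible
representation of `SO(2r+1)` with highest weight `λ` (indices here are 0-based). -/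
noncomputable def dimB (r : ℕ) (lam : Fin r → ℕ) : ℝ :=
  (∏ i : Fin r, ∏ j ∈ Finset.Ioi i,
      (((lam i : ℝ) - (lam j : ℝ) + ((j : ℕ) : ℝ) - ((i : ℕ) : ℝ)) /
        (((j : ℕ) : ℝ) - ((i : ℕ) : ℝ)))) *
    ∏ i : Fin r, ∏ j ∈ Finset.Ici i,
      (((lam i : ℝ) + (lam j : ℝ) + 2 * (r : ℝ) + 1 - (((i : ℕ) : ℝ) + 1) -
          (((j : ℕ) : ℝ) + 1)) /
        (2 * (r : ℝ) + 1 - (((i : ℕ) : ℝ) + 1) - (((j : ℕ) : ℝ) + 1)))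

set_option maxHeartbeats 1000000

section Aux

private lemma fin_succ_le {r : ℕ} (i : Fin r) : ((i : ℕ) : ℝ) + 1 ≤ (r : ℝ) := by
  exact_mod_cast Nat.succ_le_of_lt i.2


private lemma one_le_prod_real {ι : Type*} {s : Finset ι} {f : ι → ℝ}
    (h : ∀ i ∈ s, 1 ≤ f i) : 1 ≤ ∏ i ∈ s, f i := by
  calc (1 : ℝ) = ∏ _i ∈ s, 1 := by simp
    _ ≤ ∏ i ∈ s, f i := Finset.prod_le_prod (by simp) h

private lemma single_le_prod_real {ι : Type*} [DecidableEq ι] {s : Finset ι} {f : ι → ℝ}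
    (h : ∀ i ∈ s, 1 ≤ f i) {a : ι} (ha : a ∈ s) : f a ≤ ∏ i ∈ s, f i := by
  rw [← Finset.mul_prod_erase s f ha]
  have h1 : (1 : ℝ) ≤ ∏ i ∈ s.erase a, f i :=
    one_le_prod_real fun i hi => h i (Finset.mem_of_mem_erase hi)
  have h0 : (0 : ℝ) ≤ f a := le_trans zero_le_one (h a ha)
  nlinarith

lemma casimirB_nonneg (r : ℕ) (lam : Fin r → ℕ) : 0 ≤ casimirB r lam := by
  unfold casimirB
  apply mul_nonneg (by positivity)
  apply Finset.sum_nonneg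
  intro i _
  have h1 := fin_succ_le i
  have h2 : (0 : ℝ) ≤ (lam i : ℝ) := Nat.cast_nonneg _
  nlinarith

lemma casimirB_zero (r : ℕ) : casimirB r (fun _ => 0) = 0 := by
  simp [casimirB]

private lemma denom1_pos {r : ℕ} {i j : Fin r} (hij : j ∈ Finset.Ioi i) :
    (0 : ℝ) < ((j : ℕ) : ℝ) - ((i : ℕ) : ℝ) := by
  rw [Finset.mem_Ioi] at hij
  have h : (i : ℕ) < (j : ℕ) := hij
  have : ((i : ℕ) : ℝ) < ((j : ℕ) : ℝ) := by exact_mod_cast h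
  linarith

private lemma denom2_pos {r : ℕ} {i j : Fin r} (hij : j ∈ Finset.Ici i) :
    (0 : ℝ) < 2 * (r : ℝ) + 1 - (((i : ℕ) : ℝ) + 1) - (((j : ℕ) : ℝ) + 1) := by
  have h1 := fin_succ_le i
  have h2 := fin_succ_le j
  rw [Finset.mem_Ici] at hij
  have hij' : ((i : ℕ) : ℝ) ≤ ((j : ℕ) : ℝ) := by exact_mod_cast (Fin.le_def.mp hij)
  linarith

private lemma factor1_ge_one {r : ℕ} {lam : Fin r → ℕ} (h : Antitone lam)
    {i j : Fin r} (hij : j ∈ Finset.Ioi i) :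
    (1 : ℝ) ≤ ((lam i : ℝ) - (lam j : ℝ) + ((j : ℕ) : ℝ) - ((i : ℕ) : ℝ)) /
        (((j : ℕ) : ℝ) - ((i : ℕ) : ℝ)) := by
  have hd := denom1_pos hij
  rw [Finset.mem_Ioi] at hij
  have hlam : (lam j : ℝ) ≤ (lam i : ℝ) := by exact_mod_cast h hij.le
  rw [le_div_iff₀ hd]
  linarith

private lemma factor2_ge_one {r : ℕ} {lam : Fin r → ℕ}
    {i j : Fin r} (hij : j ∈ Finset.Ici i) :
    (1 : ℝ) ≤ ((lam i : ℝ) + (lam j : ℝ) + 2 * (r : ℝ) + 1 - (((i : ℕ) : ℝ) + 1) -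
          (((j : ℕ) : ℝ) + 1)) /
        (2 * (r : ℝ) + 1 - (((i : ℕ) : ℝ) + 1) - (((j : ℕ) : ℝ) + 1)) := by
  have hd := denom2_pos hij
  have h1 : (0 : ℝ) ≤ (lam i : ℝ) := Nat.cast_nonneg _
  have h2 : (0 : ℝ) ≤ (lam j : ℝ) := Nat.cast_nonneg _
  rw [le_div_iff₀ hd]
  linarith

lemma one_le_dimB {r : ℕ} {lam : Fin r → ℕ} (h : Antitone lam) : 1 ≤ dimB r lam := by
  unfold dimB
  have h1 : (1 : ℝ) ≤ ∏ i : Fin r, ∏ j ∈ Finset.Ioi i,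
      (((lam i : ℝ) - (lam j : ℝ) + ((j : ℕ) : ℝ) - ((i : ℕ) : ℝ)) /
        (((j : ℕ) : ℝ) - ((i : ℕ) : ℝ))) :=
    by
    apply one_le_prod_real
    intro i _
    apply one_le_prod_real
    intro j hj
    exact factor1_ge_one h hj
  have h2 : (1 : ℝ) ≤ ∏ i : Fin r, ∏ j ∈ Finset.Ici i,
      (((lam i : ℝ) + (lam j : ℝ) + 2 * (r : ℝ) + 1 - (((i : ℕ) : ℝ) + 1) -
          (((j : ℕ) : ℝ) + 1)) /
        (2 * (r : ℝ) + 1 - (((i : ℕ) : ℝ) + 1) - (((j : ℕ) : ℝ) + 1))) := by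
    apply one_le_prod_real
    intro i _
    apply one_le_prod_real
    intro j hj
    exact factor2_ge_one hj
  nlinarith

lemma dimB_zero (r : ℕ) : dimB r (fun _ => 0) = 1 := by
  unfold dimB
  rw [show (((fun _ : Fin r => 0) : Fin r → ℕ) = fun _ => 0) from rfl]
  have e1 : ∀ i : Fin r, ∀ j ∈ Finset.Ioi i,
      (((0 : ℕ) : ℝ) - ((0 : ℕ) : ℝ) + ((j : ℕ) : ℝ) - ((i : ℕ) : ℝ)) /
        (((j : ℕ) : ℝ) - ((i : ℕ) : ℝ)) = 1 := by
    intro i j hj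
    have hd := denom1_pos hj
    rw [show (((0 : ℕ) : ℝ) - ((0 : ℕ) : ℝ) + ((j : ℕ) : ℝ) - ((i : ℕ) : ℝ)) =
        (((j : ℕ) : ℝ) - ((i : ℕ) : ℝ)) from by push_cast; ring]
    exact div_self (ne_of_gt hd)
  have e2 : ∀ i : Fin r, ∀ j ∈ Finset.Ici i,
      (((0 : ℕ) : ℝ) + ((0 : ℕ) : ℝ) + 2 * (r : ℝ) + 1 - (((i : ℕ) : ℝ) + 1) -
          (((j : ℕ) : ℝ) + 1)) /
        (2 * (r : ℝ) + 1 - (((i : ℕ) : ℝ) + 1) - (((j : ℕ) : ℝ) + 1)) = 1 := by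
    intro i j hj
    have hd := denom2_pos hj
    rw [show (((0 : ℕ) : ℝ) + ((0 : ℕ) : ℝ) + 2 * (r : ℝ) + 1 - (((i : ℕ) : ℝ) + 1) -
          (((j : ℕ) : ℝ) + 1)) =
        (2 * (r : ℝ) + 1 - (((i : ℕ) : ℝ) + 1) - (((j : ℕ) : ℝ) + 1)) from by push_cast; ring]
    exact div_self (ne_of_gt hd)
  rw [Finset.prod_congr rfl fun i _ => Finset.prod_congr rfl (e1 i),
      Finset.prod_congr rfl fun i _ => Finset.prod_congr rfl (e2 i)]
  simp

lemma dimB_ge {r : ℕ} (hr : 1 ≤ r) {lam : Fin r → ℕ} (h : Antitone lam) :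
    (∏ i : Fin r, ((lam i : ℝ) + 1)) / (2 * (r : ℝ) - 1) ^ r ≤ dimB r lam := by
  have hm : (1 : ℝ) ≤ 2 * (r : ℝ) - 1 := by
    have : (1 : ℝ) ≤ (r : ℝ) := by exact_mod_cast hr
    linarith
  have hP1 : (1 : ℝ) ≤ ∏ i : Fin r, ∏ j ∈ Finset.Ioi i,
      (((lam i : ℝ) - (lam j : ℝ) + ((j : ℕ) : ℝ) - ((i : ℕ) : ℝ)) /
        (((j : ℕ) : ℝ) - ((i : ℕ) : ℝ))) := by
    apply one_le_prod_real
    intro i _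
    apply one_le_prod_real
    intro j hj
    exact factor1_ge_one h hj
  have hdiag : ∀ i : Fin r, ((lam i : ℝ) + 1) / (2 * (r : ℝ) - 1) ≤
      ((lam i : ℝ) + (lam i : ℝ) + 2 * (r : ℝ) + 1 - (((i : ℕ) : ℝ) + 1) -
          (((i : ℕ) : ℝ) + 1)) /
        (2 * (r : ℝ) + 1 - (((i : ℕ) : ℝ) + 1) - (((i : ℕ) : ℝ) + 1)) := by
    intro i
    have hdp := denom2_pos (Finset.mem_Ici.mpr (le_refl i))
    have h1 : (0 : ℝ) ≤ (lam i : ℝ) := Nat.cast_nonneg _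
    have h2 := fin_succ_le i
    rw [div_le_div_iff₀ (by linarith) hdp]
    nlinarith
  have hinner : ∀ i : Fin r, ((lam i : ℝ) + 1) / (2 * (r : ℝ) - 1) ≤
      ∏ j ∈ Finset.Ici i,
      (((lam i : ℝ) + (lam j : ℝ) + 2 * (r : ℝ) + 1 - (((i : ℕ) : ℝ) + 1) -
          (((j : ℕ) : ℝ) + 1)) /
        (2 * (r : ℝ) + 1 - (((i : ℕ) : ℝ) + 1) - (((j : ℕ) : ℝ) + 1))) := by
    intro i
    refine le_trans (hdiag i) ?_
    exact single_le_prod_real (fun j hj => factor2_ge_one hj)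
      (Finset.mem_Ici.mpr (le_refl i))
  have hdnn : ∀ i : Fin r, (0 : ℝ) ≤ ((lam i : ℝ) + 1) / (2 * (r : ℝ) - 1) := by
    intro i
    have h1 : (0 : ℝ) ≤ (lam i : ℝ) := Nat.cast_nonneg _
    positivity
  have hP2 : (∏ i : Fin r, ((lam i : ℝ) + 1) / (2 * (r : ℝ) - 1)) ≤
      ∏ i : Fin r, ∏ j ∈ Finset.Ici i,
      (((lam i : ℝ) + (lam j : ℝ) + 2 * (r : ℝ) + 1 - (((i : ℕ) : ℝ) + 1) -
          (((j : ℕ) : ℝ) + 1)) /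
        (2 * (r : ℝ) + 1 - (((i : ℕ) : ℝ) + 1) - (((j : ℕ) : ℝ) + 1))) :=
    Finset.prod_le_prod (fun i _ => hdnn i) (fun i _ => hinner i)
  have hP2nn : (0 : ℝ) ≤ ∏ i : Fin r, ∏ j ∈ Finset.Ici i,
      (((lam i : ℝ) + (lam j : ℝ) + 2 * (r : ℝ) + 1 - (((i : ℕ) : ℝ) + 1) -
          (((j : ℕ) : ℝ) + 1)) /
        (2 * (r : ℝ) + 1 - (((i : ℕ) : ℝ) + 1) - (((j : ℕ) : ℝ) + 1))) :=
    le_trans (Finset.prod_nonneg fun i _ => hdnn i) hP2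
  unfold dimB
  calc (∏ i : Fin r, ((lam i : ℝ) + 1)) / (2 * (r : ℝ) - 1) ^ r
      = ∏ i : Fin r, ((lam i : ℝ) + 1) / (2 * (r : ℝ) - 1) := by
        rw [Finset.prod_div_distrib, Finset.prod_const, Finset.card_univ, Fintype.card_fin]
    _ ≤ ∏ i : Fin r, ∏ j ∈ Finset.Ici i,
        (((lam i : ℝ) + (lam j : ℝ) + 2 * (r : ℝ) + 1 - (((i : ℕ) : ℝ) + 1) -
            (((j : ℕ) : ℝ) + 1)) /
          (2 * (r : ℝ) + 1 - (((i : ℕ) : ℝ) + 1) - (((j : ℕ) : ℝ) + 1))) := hP2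
    _ ≤ _ := le_mul_of_one_le_left hP2nn hP1

lemma summable_pi_nat_prod {g : ℕ → ℝ} (hg0 : ∀ n, 0 ≤ g n) (hg : Summable g) :
    ∀ r : ℕ, Summable (fun l : Fin r → ℕ => ∏ i, g (l i)) := by
  intro r
  induction r with
  | zero =>
    have : (fun l : Fin 0 → ℕ => ∏ i, g (l i)) = fun _ => 1 := by
      funext l; simp
    rw [this]
    exact Summable.of_finite
  | succ n ih =>
    have h2 : Summable (fun p : ℕ × (Fin n → ℕ) => g p.1 * ∏ i, g (p.2 i)) := by
      have := Summable.mul_of_nonneg (f := g) (g := fun l : Fin n → ℕ => ∏ i, g (l i))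
        hg ih (fun n => hg0 n) (fun l => Finset.prod_nonneg fun i _ => hg0 _)
      exact this
    have key : ((fun l : Fin (n + 1) → ℕ => ∏ i, g (l i)) ∘
        (Fin.consEquiv (fun _ : Fin (n + 1) => ℕ))) =
        (fun p : ℕ × (Fin n → ℕ) => g p.1 * ∏ i, g (p.2 i)) := by
      funext p
      simp [Fin.consEquiv, Fin.prod_univ_succ]
    rw [← key] at h2
    exact (Fin.consEquiv (fun _ : Fin (n + 1) => ℕ)).summable_iff.mp h2


end Aux

/-- For `r ≥ 1`, `g ≥ 2` and `T ≥ 0`, both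
`Σ_{λ ∈ Λ_r^B} e^{-(T/2) c_λ^B} (d_λ^B)^{2-2g}` and `Σ_{λ ∈ Λ_r^B} (d_λ^B)^{-2}` converge,
and `1 ≤ Σ_{λ} e^{-(T/2) c_λ^B} (d_λ^B)^{2-2g} ≤ Σ_{λ} (d_λ^B)^{-2}`. -/
theorem partition_function_B_sandwich (r g : ℕ) (hr : 1 ≤ r) (hg : 2 ≤ g)
    (T : ℝ) (hT : 0 ≤ T) :
    Summable (fun lam : {l : Fin r → ℕ // Antitone l} =>
      Real.exp (-(T / 2) * casimirB r lam.1) * dimB r lam.1 ^ (2 - 2 * (g : ℤ))) ∧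
    Summable (fun lam : {l : Fin r → ℕ // Antitone l} => dimB r lam.1 ^ (-2 : ℤ)) ∧
    (1 ≤ ∑' lam : {l : Fin r → ℕ // Antitone l},
        Real.exp (-(T / 2) * casimirB r lam.1) * dimB r lam.1 ^ (2 - 2 * (g : ℤ))) ∧
    (∑' lam : {l : Fin r → ℕ // Antitone l},
        Real.exp (-(T / 2) * casimirB r lam.1) * dimB r lam.1 ^ (2 - 2 * (g : ℤ)))
      ≤ ∑' lam : {l : Fin r → ℕ // Antitone l}, dimB r lam.1 ^ (-2 : ℤ) := by
  set S := {l : Fin r → ℕ // Antitone l}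
  set f : S → ℝ := fun lam =>
    Real.exp (-(T / 2) * casimirB r lam.1) * dimB r lam.1 ^ (2 - 2 * (g : ℤ)) with hf_def
  set b : S → ℝ := fun lam => dimB r lam.1 ^ (-2 : ℤ) with hb_def
  have hdim1 : ∀ s : S, (1 : ℝ) ≤ dimB r s.1 := fun s => one_le_dimB s.2
  have hdimpos : ∀ s : S, (0 : ℝ) < dimB r s.1 := fun s => lt_of_lt_of_le one_pos (hdim1 s)
  -- the dominating summable bound
  have hgsum : Summable (fun n : ℕ => 1 / ((n : ℝ) + 1) ^ 2) := by
    have h0 : Summable (fun n : ℕ => 1 / ((n : ℝ)) ^ 2) := Real.summable_one_div_nat_pow.mpr one_lt_two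
    have := (summable_nat_add_iff 1).mpr h0
    apply this.congr
    intro n
    push_cast
    ring
  have hBfull : Summable (fun l : Fin r → ℕ =>
      ((2 * (r : ℝ) - 1) ^ r) ^ 2 * ∏ i, 1 / ((l i : ℝ) + 1) ^ 2) := by
    apply Summable.mul_left
    exact summable_pi_nat_prod (fun n => by positivity) hgsum r
  have hBsub : Summable (fun s : S =>
      ((2 * (r : ℝ) - 1) ^ r) ^ 2 * ∏ i, 1 / ((s.1 i : ℝ) + 1) ^ 2) :=
    hBfull.comp_injective Subtype.val_injective
  -- b is bounded by B
  have hm1 : (1 : ℝ) ≤ 2 * (r : ℝ) - 1 := by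
    have : (1 : ℝ) ≤ (r : ℝ) := by exact_mod_cast hr
    linarith
  have hbB : ∀ s : S, b s ≤ ((2 * (r : ℝ) - 1) ^ r) ^ 2 * ∏ i, 1 / ((s.1 i : ℝ) + 1) ^ 2 := by
    intro s
    have hge := dimB_ge hr s.2
    have hDpos : (0 : ℝ) < ∏ i : Fin r, ((s.1 i : ℝ) + 1) :=
      Finset.prod_pos fun i _ => by positivity
    have hmr : (0 : ℝ) < (2 * (r : ℝ) - 1) ^ r := by positivity
    have hlow : (0 : ℝ) < (∏ i : Fin r, ((s.1 i : ℝ) + 1)) / (2 * (r : ℝ) - 1) ^ r :=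
      div_pos hDpos hmr
    have hb2 : b s = (dimB r s.1 ^ 2)⁻¹ := by
      show dimB r s.1 ^ (-2 : ℤ) = (dimB r s.1 ^ 2)⁻¹
      rw [zpow_neg]
      norm_cast
    rw [hb2]
    have hsq : ((∏ i : Fin r, ((s.1 i : ℝ) + 1)) / (2 * (r : ℝ) - 1) ^ r) ^ 2 ≤
        dimB r s.1 ^ 2 := by
      apply pow_le_pow_left₀ hlow.le hge
    have h1 : (dimB r s.1 ^ 2)⁻¹ ≤
        (((∏ i : Fin r, ((s.1 i : ℝ) + 1)) / (2 * (r : ℝ) - 1) ^ r) ^ 2)⁻¹ := by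
      apply inv_anti₀ (by positivity) hsq
    apply h1.trans
    apply le_of_eq
    rw [div_pow, inv_div, div_eq_mul_inv, ← Finset.prod_pow, ← Finset.prod_inv_distrib]
    simp [one_div]
  have hbnn : ∀ s : S, (0 : ℝ) ≤ b s := by
    intro s
    exact zpow_nonneg (hdimpos s).le _
  have hb : Summable b := Summable.of_nonneg_of_le hbnn hbB hBsub
  -- termwise bound f ≤ b
  have hfb : ∀ s : S, f s ≤ b s := by
    intro s
    show Real.exp (-(T / 2) * casimirB r s.1) * dimB r s.1 ^ (2 - 2 * (g : ℤ)) ≤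
      dimB r s.1 ^ (-2 : ℤ)
    have hexp : Real.exp (-(T / 2) * casimirB r s.1) ≤ 1 := by
      rw [Real.exp_le_one_iff]
      have := casimirB_nonneg r s.1
      nlinarith
    have hz : dimB r s.1 ^ (2 - 2 * (g : ℤ)) ≤ dimB r s.1 ^ (-2 : ℤ) := by
      apply zpow_le_zpow_right₀ (hdim1 s)
      have : (2 : ℤ) ≤ (g : ℤ) := by exact_mod_cast hg
      linarith
    calc Real.exp (-(T / 2) * casimirB r s.1) * dimB r s.1 ^ (2 - 2 * (g : ℤ))
        ≤ 1 * dimB r s.1 ^ (-2 : ℤ) := by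
          apply mul_le_mul hexp hz (zpow_nonneg (hdimpos s).le _) one_pos.le
      _ = dimB r s.1 ^ (-2 : ℤ) := one_mul _
  have hfnn : ∀ s : S, (0 : ℝ) ≤ f s := by
    intro s
    exact mul_nonneg (Real.exp_pos _).le (zpow_nonneg (hdimpos s).le _)
  have hf : Summable f := Summable.of_nonneg_of_le hfnn hfb hb
  refine ⟨hf, hb, ?_, Summable.tsum_le_tsum hfb hf hb⟩
  -- lower bound: term at 0
  have h0 : f ⟨(fun _ => 0), antitone_const⟩ = 1 := by
    show Real.exp (-(T / 2) * casimirB r (fun _ => 0)) *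
      dimB r (fun _ => 0) ^ (2 - 2 * (g : ℤ)) = 1
    rw [casimirB_zero, dimB_zero]
    simp
  calc (1 : ℝ) = f ⟨(fun _ => 0), antitone_const⟩ := h0.symm
    _ ≤ ∑' s : S, f s := Summable.le_tsum hf _ fun s _ => hfnn s
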